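/- Let τ ∈ (0,1) and let F be a continuously differentiable CDF whose τ-quantile is a singleton, with finite first moment. Then the map V(y; e⁻, v, e⁺) = (e⁻ + (1/τ)S⁻_τ(y;v), 𝟙{y≤v} − τ, e⁺ − (1/(1−τ))S⁺_τ(y;v)) is a strict identification function for (ES⁻_τ, q_τ, ES⁺_τ): E_F[V(Y; e⁻,v,e⁺)] = 0 if and only if v = F⁻¹(τ), e⁻ = ES⁻_τ(F) and e⁺ = ES⁺_τ(F). -/

import Mathlib

open MeasureTheory

noncomputable def Sminus (τ y a : ℝ) : ℝ :=
  ((if y ≤ a then (1:ℝ) else 0) - τ) * a - (if y ≤ a then (1:ℝ) else 0) * y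

noncomputable def Splus (τ y a : ℝ) : ℝ :=
  (1 - τ - (if a < y then (1:ℝ) else 0)) * a + (if a < y then (1:ℝ) else 0) * y

noncomputable def genInv (μ : Measure ℝ) (p : ℝ) : ℝ :=
  sInf {x : ℝ | p ≤ (μ (Set.Iic x)).toReal}

noncomputable def ESminus (μ : Measure ℝ) (τ : ℝ) : ℝ :=
  (1 / τ) * ∫ p in Set.Ioc (0:ℝ) τ, genInv μ p

noncomputable def ESplus (μ : Measure ℝ) (τ : ℝ) : ℝ :=
  (1 / (1 - τ)) * ∫ p in Set.Ioc τ (1:ℝ), genInv μ p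

def quantileSet (μ : Measure ℝ) (τ : ℝ) : Set ℝ :=
  {t | (μ (Set.Iio t)).toReal ≤ τ ∧ τ ≤ (μ (Set.Iic t)).toReal}

/-!
By right-continuity of the cdf `F`, the law of `genInv μ U`, with `U` uniform on `(0,1)`, is
`μ`; hence `∫ p in Ioc 0 τ, F⁻¹ p = E[Y 𝟙{Y ≤ q}]` and `∫ p in Ioc τ 1, F⁻¹ p = E[Y 𝟙{Y > q}]`
at `q = F⁻¹(τ)`, where continuity of `F` gives `F q = τ`. Both `E[S⁻_τ(Y;v)]` and `E[S⁺_τ(Y;v)]`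
equal `(F v - τ) v` minus, respectively plus, a truncated mean, so the middle equation `F v = τ`
pins `v` to the unique `τ`-quantile, after which the outer equations are exactly the definitions
of `ES⁻_τ` and `ES⁺_τ`.
-/

open Set Filter Topology ProbabilityTheory

section Quantile

lemma nonempty_le_cdf {μ : Measure ℝ} {p : ℝ} (hp : p < 1) : {x | p ≤ cdf μ x}.Nonempty :=
  ((tendsto_cdf_atTop μ).eventually (eventually_ge_nhds hp)).exists

lemma bddBelow_le_cdf {μ : Measure ℝ} {p : ℝ} (hp : 0 < p) : BddBelow {x | p ≤ cdf μ x} := by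
  obtain ⟨x₀, hx₀⟩ := eventually_atBot.1 ((tendsto_cdf_atBot μ).eventually (eventually_lt_nhds hp))
  refine ⟨x₀, fun x hx => ?_⟩
  by_contra! hlt
  exact (hx₀ x hlt.le).not_ge hx

variable {μ : Measure ℝ} [IsProbabilityMeasure μ]

lemma measure_Iic_toReal (x : ℝ) : (μ (Iic x)).toReal = cdf μ x :=
  (cdf_eq_real μ x).symm

lemma genInv_eq_sInf (p : ℝ) : genInv μ p = sInf {x | p ≤ cdf μ x} := by
  simp only [genInv, measure_Iic_toReal]

lemma le_cdf_genInv {p : ℝ} (hp : p ∈ Ioo 0 1) : p ≤ cdf μ (genInv μ p) := by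
  rw [genInv_eq_sInf]
  have hright : ∀ᶠ x in 𝓝[>] sInf {x | p ≤ cdf μ x}, p ≤ cdf μ x := by
    filter_upwards [self_mem_nhdsWithin] with x hx
    obtain ⟨s, hs, hsx⟩ := exists_lt_of_csInf_lt (nonempty_le_cdf hp.2) hx
    exact hs.trans (monotone_cdf μ hsx.le)
  exact ge_of_tendsto (((cdf μ).right_continuous _).mono Ioi_subset_Ici_self) hright

lemma genInv_le_iff {p : ℝ} (hp : p ∈ Ioo 0 1) (x : ℝ) : genInv μ p ≤ x ↔ p ≤ cdf μ x :=
  ⟨fun h => (le_cdf_genInv hp).trans (monotone_cdf μ h),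
    fun h => by rw [genInv_eq_sInf]; exact csInf_le (bddBelow_le_cdf hp.1) h⟩

lemma cdf_genInv {p : ℝ} (hp : p ∈ Ioo 0 1) (hcont : ContinuousAt (cdf μ) (genInv μ p)) :
    cdf μ (genInv μ p) = p := by
  refine le_antisymm ?_ (le_cdf_genInv hp)
  have hleft : ∀ᶠ x in 𝓝[<] genInv μ p, cdf μ x ≤ p := by
    filter_upwards [self_mem_nhdsWithin] with x hx
    exact (not_le.1 fun h => (not_le.2 hx) ((genInv_le_iff hp x).2 h)).le
  exact le_of_tendsto (hcont.mono_left nhdsWithin_le_nhds) hleft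

lemma monotoneOn_genInv : MonotoneOn (genInv μ) (Ioo 0 1) := fun _ hp _ hq hpq =>
  (genInv_le_iff hp _).2 (hpq.trans (le_cdf_genInv hq))

lemma volume_Iic_inter_Ioo_zero_one {c : ℝ} (hc : c ≤ 1) :
    volume (Iic c ∩ Ioo 0 1) = ENNReal.ofReal c := by
  rw [measure_congr ((ae_eq_refl (Iic c)).inter Ioo_ae_eq_Ioc), Iic_inter_Ioc_of_le hc,
    Real.volume_Ioc, sub_zero]

lemma aemeasurable_genInv : AEMeasurable (genInv μ) (volume.restrict (Ioo 0 1)) :=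
  aemeasurable_restrict_of_monotoneOn measurableSet_Ioo monotoneOn_genInv

theorem map_genInv_volume : (volume.restrict (Ioo 0 1)).map (genInv μ) = μ := by
  refine Measure.ext_of_Iic _ _ fun x => ?_
  have hpre : genInv μ ⁻¹' Iic x ∩ Ioo 0 1 = Iic (cdf μ x) ∩ Ioo 0 1 := by
    ext p
    simp only [mem_inter_iff, mem_preimage, mem_Iic, and_congr_left_iff]
    exact fun hp => genInv_le_iff hp x
  rw [Measure.map_apply_of_aemeasurable aemeasurable_genInv measurableSet_Iic,
    Measure.restrict_apply' measurableSet_Ioo, hpre,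
    volume_Iic_inter_Ioo_zero_one (cdf_le_one μ x), ofReal_cdf]

variable {E : Type*} [NormedAddCommGroup E] [NormedSpace ℝ E] {f : ℝ → E}

lemma integral_comp_genInv (hf : AEStronglyMeasurable f μ) :
    ∫ y, f y ∂μ = ∫ p in Ioo 0 1, f (genInv μ p) := by
  conv_lhs => rw [← map_genInv_volume (μ := μ)]
  exact integral_map aemeasurable_genInv (by rwa [map_genInv_volume])

lemma setIntegral_comp_genInv {A B : Set ℝ} (hA : MeasurableSet A) (hB : MeasurableSet B)
    (hAB : ∀ p ∈ Ioo 0 1, genInv μ p ∈ A ↔ p ∈ B) (hf : AEStronglyMeasurable f μ) :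
    ∫ y in A, f y ∂μ = ∫ p in Ioo 0 1 ∩ B, f (genInv μ p) := by
  calc ∫ y in A, f y ∂μ = ∫ y, A.indicator f y ∂μ := (integral_indicator hA).symm
    _ = ∫ p in Ioo 0 1, A.indicator f (genInv μ p) := integral_comp_genInv (hf.indicator hA)
    _ = ∫ p in Ioo 0 1, B.indicator (f ∘ genInv μ) p :=
        setIntegral_congr_fun measurableSet_Ioo fun p hp => by
          by_cases h : p ∈ B
          · rw [indicator_of_mem ((hAB p hp).2 h), indicator_of_mem h, Function.comp_apply]
          · rw [indicator_of_notMem (mt (hAB p hp).1 h), indicator_of_notMem h]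
    _ = ∫ p in Ioo 0 1 ∩ B, f (genInv μ p) := setIntegral_indicator hB

lemma setIntegral_Iic_genInv {τ : ℝ} (hτ : τ ∈ Ioo 0 1) (hq : cdf μ (genInv μ τ) = τ)
    (hf : AEStronglyMeasurable f μ) :
    ∫ y in Iic (genInv μ τ), f y ∂μ = ∫ p in Ioc 0 τ, f (genInv μ p) := by
  have hset : Ioo 0 1 ∩ Iic τ = Ioc 0 τ := by
    ext p
    simp only [mem_inter_iff, mem_Ioo, mem_Iic, mem_Ioc]
    exact ⟨fun h => ⟨h.1.1, h.2⟩, fun h => ⟨⟨h.1, h.2.trans_lt hτ.2⟩, h.2⟩⟩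
  rw [setIntegral_comp_genInv measurableSet_Iic measurableSet_Iic
    (fun p hp => by rw [mem_Iic, mem_Iic, genInv_le_iff hp, hq]) hf, hset]

lemma setIntegral_Ioi_genInv {τ : ℝ} (hτ : τ ∈ Ioo 0 1) (hq : cdf μ (genInv μ τ) = τ)
    (hf : AEStronglyMeasurable f μ) :
    ∫ y in Ioi (genInv μ τ), f y ∂μ = ∫ p in Ioc τ 1, f (genInv μ p) := by
  have hset : Ioo 0 1 ∩ Ioi τ = Ioo τ 1 := by
    ext p
    simp only [mem_inter_iff, mem_Ioo, mem_Ioi]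
    exact ⟨fun h => ⟨h.2, h.1.2⟩, fun h => ⟨⟨hτ.1.trans h.1, h.2⟩, h.1⟩⟩
  rw [setIntegral_comp_genInv measurableSet_Ioi measurableSet_Ioi
    (fun p hp => by rw [mem_Ioi, mem_Ioi, ← not_le, ← not_le, genInv_le_iff hp, hq]) hf, hset,
    integral_Ioc_eq_integral_Ioo]

lemma mem_quantileSet_of_cdf_eq {τ v : ℝ} (h : cdf μ v = τ) : v ∈ quantileSet μ τ := by
  refine ⟨?_, by rw [measure_Iic_toReal, h]⟩
  rw [← h, ← measure_Iic_toReal]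
  exact ENNReal.toReal_mono (measure_ne_top μ _) (measure_mono Iio_subset_Iic_self)

end Quantile

section ScoringFunctions

variable {μ : Measure ℝ} [IsProbabilityMeasure μ]

lemma Sminus_eq (τ y v : ℝ) :
    Sminus τ y v = ((if y ≤ v then 1 else 0) - τ) * v - (Iic v).indicator (fun y => y) y := by
  by_cases h : y ≤ v <;> simp [Sminus, h]

lemma Splus_eq (τ y v : ℝ) :
    Splus τ y v = ((if y ≤ v then 1 else 0) - τ) * v + (Ioi v).indicator (fun y => y) y := by
  by_cases h : y ≤ v <;> simp [Splus, h, not_lt.2, lt_of_not_ge]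

lemma ite_le_eq_indicator (y v : ℝ) : (if y ≤ v then (1 : ℝ) else 0) = (Iic v).indicator 1 y := by
  simp [indicator_apply]

lemma integrable_ite_le_sub (τ v : ℝ) :
    Integrable (fun y => (if y ≤ v then (1 : ℝ) else 0) - τ) μ := by
  simp_rw [ite_le_eq_indicator]
  exact ((integrable_const 1).indicator measurableSet_Iic).sub (integrable_const τ)

lemma integral_ite_le_sub (τ v : ℝ) :
    ∫ y, ((if y ≤ v then (1 : ℝ) else 0) - τ) ∂μ = cdf μ v - τ := by
  simp_rw [ite_le_eq_indicator]
  rw [integral_sub (f := (Iic v).indicator 1) ((integrable_const 1).indicator measurableSet_Iic)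
    (integrable_const τ),
    integral_indicator_one measurableSet_Iic, integral_const, cdf_eq_real]
  simp

variable {τ v : ℝ}

lemma integrable_Sminus (hY : Integrable (fun y : ℝ => y) μ) :
    Integrable (fun y => Sminus τ y v) μ := by
  simp_rw [Sminus_eq]
  exact ((integrable_ite_le_sub τ v).mul_const v).sub (hY.indicator measurableSet_Iic)

lemma integrable_Splus (hY : Integrable (fun y : ℝ => y) μ) :
    Integrable (fun y => Splus τ y v) μ := by
  simp_rw [Splus_eq]
  exact ((integrable_ite_le_sub τ v).mul_const v).add (hY.indicator measurableSet_Ioi)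

lemma integral_Sminus (hY : Integrable (fun y : ℝ => y) μ) :
    ∫ y, Sminus τ y v ∂μ = (cdf μ v - τ) * v - ∫ y in Iic v, y ∂μ := by
  simp_rw [Sminus_eq]
  rw [integral_sub ((integrable_ite_le_sub τ v).mul_const v) (hY.indicator measurableSet_Iic),
    integral_mul_const, integral_ite_le_sub, integral_indicator measurableSet_Iic]

lemma integral_Splus (hY : Integrable (fun y : ℝ => y) μ) :
    ∫ y, Splus τ y v ∂μ = (cdf μ v - τ) * v + ∫ y in Ioi v, y ∂μ := by
  simp_rw [Splus_eq]
  rw [integral_add ((integrable_ite_le_sub τ v).mul_const v) (hY.indicator measurableSet_Ioi),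
    integral_mul_const, integral_ite_le_sub, integral_indicator measurableSet_Ioi]

end ScoringFunctions

/-- V is a strict identification function for the composite triplet
(ES⁻_τ, q_τ, ES⁺_τ) on continuously differentiable CDFs with a singleton τ-quantile. -/
theorem identification_function_composite_triplet
    (τ : ℝ) (hτ : τ ∈ Set.Ioo (0:ℝ) 1)
    (μ : Measure ℝ) [IsProbabilityMeasure μ]
    (hY : Integrable (fun y : ℝ => y) μ)
    (hF : ContDiff ℝ 1 (fun t : ℝ => (μ (Set.Iic t)).toReal))
    (hsingleton : quantileSet μ τ = {genInv μ τ}) :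
    ∀ em v ep : ℝ,
      ((∫ y, (em + (1/τ) * Sminus τ y v) ∂μ) = 0 ∧
       (∫ y, ((if y ≤ v then (1:ℝ) else 0) - τ) ∂μ) = 0 ∧
       (∫ y, (ep - (1/(1-τ)) * Splus τ y v) ∂μ) = 0)
      ↔ (v = genInv μ τ ∧ em = ESminus μ τ ∧ ep = ESplus μ τ) := by
  intro em v ep
  have hcont : Continuous (cdf μ) := by simpa only [measure_Iic_toReal] using hF.continuous
  have hq : cdf μ (genInv μ τ) = τ := cdf_genInv hτ hcont.continuousAt
  have hv : cdf μ v = τ → v = genInv μ τ := fun h => by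
    simpa [hsingleton] using mem_quantileSet_of_cdf_eq h
  rw [integral_add (integrable_const _) ((integrable_Sminus hY).const_mul _),
    integral_sub (integrable_const _) ((integrable_Splus hY).const_mul _),
    integral_const_mul, integral_const_mul, integral_Sminus hY, integral_Splus hY,
    integral_ite_le_sub, integral_const, integral_const, probReal_univ, one_smul, one_smul,
    ESminus, ESplus, ← setIntegral_Iic_genInv hτ hq measurable_id'.aestronglyMeasurable,
    ← setIntegral_Ioi_genInv hτ hq measurable_id'.aestronglyMeasurable]
  constructor
  · rintro ⟨h₁, h₂, h₃⟩
    obtain rfl := hv (sub_eq_zero.1 h₂)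
    rw [hq, sub_self, zero_mul] at h₁ h₃
    exact ⟨rfl, by linarith, by linarith⟩
  · rintro ⟨rfl, rfl, rfl⟩
    simp [hq]
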